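/- Level-crossing principle, upper level-passage time: define the stopping time τ̄ := min{ v ∈ {0,...,N-1} : L_v > 0 } ∧ N. Then τ̄ is optimal for the optimal stopping problem under the nonlinear expectation, i.e., for every stopping time τ ∈ T_{0,N}, E_0[X_τ] ≤ E_0[X_{τ̄}] a.s. -/

import Mathlib

open MeasureTheory Filter

/-- Running maximum `max_{t ≤ v ≤ u} L v ω` (intended for `t ≤ u`). -/
noncomputable def runMax {Ω : Type*} (L : ℕ → Ω → ℝ) (t u : ℕ) (ω : Ω) : ℝ :=
  (Finset.Icc t u).fold max (L t ω) fun v => L v ω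

/-- Running minimum `min_{t ≤ v ≤ u} K v ω` (intended for `t ≤ u`). -/
noncomputable def runMin {Ω : Type*} (K : ℕ → Ω → ℝ) (t u : ℕ) (ω : Ω) : ℝ :=
  (Finset.Icc t u).fold min (K t ω) fun v => K v ω

/-- A discrete-time nonlinear expectation on the horizon `{0, ..., N}`:
a family of maps `E t` sending square-integrable `F N`-measurable random
variables to square-integrable `F t`-measurable random variables, satisfying
monotonicity, strict monotonicity, translation invariance, the tower property,
the zero-one law and monotone convergence. -/
structure NLExp {Ω : Type*} {m0 : MeasurableSpace Ω} (μ : Measure Ω)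
    (F : Filtration ℕ m0) (N : ℕ) where
  E : ℕ → (Ω → ℝ) → Ω → ℝ
  adapted : ∀ t, t ≤ N → ∀ ξ : Ω → ℝ, StronglyMeasurable[F N] ξ → MemLp ξ 2 μ →
    StronglyMeasurable[F t] (E t ξ)
  sqInt : ∀ t, t ≤ N → ∀ ξ : Ω → ℝ, StronglyMeasurable[F N] ξ → MemLp ξ 2 μ →
    MemLp (E t ξ) 2 μ
  mono : ∀ t, t ≤ N → ∀ ξ η : Ω → ℝ, StronglyMeasurable[F N] ξ → MemLp ξ 2 μ →
    StronglyMeasurable[F N] η → MemLp η 2 μ → ξ ≤ᵐ[μ] η → E t ξ ≤ᵐ[μ] E t η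
  strictMono : ∀ t, t ≤ N → ∀ ξ η : Ω → ℝ, StronglyMeasurable[F N] ξ → MemLp ξ 2 μ →
    StronglyMeasurable[F N] η → MemLp η 2 μ → ξ ≤ᵐ[μ] η →
    0 < μ {ω | ξ ω < η ω} → 0 < μ {ω | E t ξ ω < E t η ω}
  translation : ∀ t, t ≤ N → ∀ ξ ζ : Ω → ℝ, StronglyMeasurable[F N] ξ → MemLp ξ 2 μ →
    StronglyMeasurable[F t] ζ → MemLp ζ 2 μ → E t (ξ + ζ) =ᵐ[μ] E t ξ + ζ
  tower : ∀ s t, s ≤ t → t ≤ N → ∀ ξ : Ω → ℝ, StronglyMeasurable[F N] ξ → MemLp ξ 2 μ →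
    E s (E t ξ) =ᵐ[μ] E s ξ
  zeroOne : ∀ t, t ≤ N → ∀ ξ η : Ω → ℝ, StronglyMeasurable[F N] ξ → MemLp ξ 2 μ →
    StronglyMeasurable[F N] η → MemLp η 2 μ → ∀ A : Set Ω, MeasurableSet[F t] A →
    E t (A.indicator ξ + Aᶜ.indicator η) =ᵐ[μ]
      A.indicator (E t ξ) + Aᶜ.indicator (E t η)
  monoConv : ∀ t, t ≤ N → ∀ (ξs : ℕ → Ω → ℝ) (ξ : Ω → ℝ),
    (∀ n, StronglyMeasurable[F N] (ξs n)) → (∀ n, MemLp (ξs n) 2 μ) →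
    StronglyMeasurable[F N] ξ → MemLp ξ 2 μ →
    (∀ᵐ ω ∂μ, (Monotone fun n => ξs n ω) ∨ (Antitone fun n => ξs n ω)) →
    (∀ᵐ ω ∂μ, Tendsto (fun n => ξs n ω) atTop (nhds (ξ ω))) →
    ∀ᵐ ω ∂μ, Tendsto (fun n => E t (ξs n) ω) atTop (nhds (E t ξ ω))

/-
Put `G_s := Σ_{u=s}^{N-1} max_{s≤v≤u} L_v + X_N`, so that `X_t = E_t[G_t]` for `t < N` and
`G_N = X_N`. A backward induction on `t`, splitting on `{τ ≤ t} ∈ F_t` with the zero-one law and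
passing from `t + 1` to `t` with the tower property, gives `E_0[X_τ] = E_0[G_τ]` for every stopping
time `τ ≤ N`. Pathwise `G_τ ≤ G_τ̄`: before `τ̄` all running maxima are `≤ 0`, and from `τ̄` on the
running maximum started at `τ̄` is positive and dominates the one started at any other time.
Monotonicity of `E_0` concludes.
-/

section RunningMax

variable {Ω : Type*}

lemma le_runMax (L : ℕ → Ω → ℝ) {t u v : ℕ} (ω : Ω) (hv : v ∈ Finset.Icc t u) :
    L v ω ≤ runMax L t u ω :=
  (Finset.le_fold_max _).2 (Or.inr ⟨v, hv, le_rfl⟩)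

lemma runMax_le (L : ℕ → Ω → ℝ) {t u : ℕ} (htu : t ≤ u) {ω : Ω} {c : ℝ}
    (h : ∀ v ∈ Finset.Icc t u, L v ω ≤ c) : runMax L t u ω ≤ c :=
  (Finset.fold_max_le _).2 ⟨h t (Finset.mem_Icc.2 ⟨le_rfl, htu⟩), h⟩

lemma stronglyMeasurable_runMax {m : MeasurableSpace Ω} (L : ℕ → Ω → ℝ) {t u : ℕ}
    (htu : t ≤ u) (hL : ∀ v ∈ Finset.Icc t u, StronglyMeasurable[m] (L v)) :
    StronglyMeasurable[m] (runMax L t u) := by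
  have hfold : ∀ s ⊆ Finset.Icc t u,
      StronglyMeasurable[m] fun ω => s.fold max (L t ω) fun v => L v ω := by
    intro s
    induction s using Finset.cons_induction with
    | empty => simpa using hL t (Finset.mem_Icc.2 ⟨le_rfl, htu⟩)
    | cons a s ha ih =>
      intro hs
      simp only [Finset.fold_cons]
      exact (hL a (hs (Finset.mem_cons_self a s))).sup (ih ((Finset.subset_cons ha).trans hs))
  exact hfold _ subset_rfl

lemma stronglyMeasurable_sum_runMax {m0 : MeasurableSpace Ω} {F : Filtration ℕ m0}
    {L : ℕ → Ω → ℝ} {N : ℕ} (hL : ∀ t < N, StronglyMeasurable[F t] (L t)) (s : ℕ) :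
    StronglyMeasurable[F N] fun ω => ∑ u ∈ Finset.Ico s N, runMax L s u ω := by
  refine Finset.stronglyMeasurable_fun_sum _ fun u hu => ?_
  obtain ⟨hsu, huN⟩ := Finset.mem_Ico.1 hu
  refine stronglyMeasurable_runMax L hsu fun v hv => ?_
  have hvN := (Finset.mem_Icc.1 hv).2.trans_lt huN
  exact (hL v hvN).mono (F.mono hvN.le)

lemma runMax_le_runMax_of_passage (L : ℕ → Ω → ℝ) {N σ τ u : ℕ} {ω : Ω}
    (hneg : ∀ v < σ, L v ω ≤ 0) (hpos : σ < N → 0 < L σ ω)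
    (hτu : τ ≤ u) (hσu : σ ≤ u) (huN : u < N) :
    runMax L τ u ω ≤ runMax L σ u ω := by
  refine runMax_le L hτu fun v hv => ?_
  rcases lt_or_ge v σ with hvσ | hσv
  · calc L v ω ≤ 0 := hneg v hvσ
      _ ≤ L σ ω := (hpos (hσu.trans_lt huN)).le
      _ ≤ runMax L σ u ω := le_runMax L ω (Finset.mem_Icc.2 ⟨le_rfl, hσu⟩)
  · exact le_runMax L ω (Finset.mem_Icc.2 ⟨hσv, (Finset.mem_Icc.1 hv).2⟩)

lemma sum_runMax_le_of_passage (L : ℕ → Ω → ℝ) {N σ τ : ℕ} {ω : Ω}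
    (hneg : ∀ v < σ, L v ω ≤ 0) (hpos : σ < N → 0 < L σ ω) (hσN : σ ≤ N) :
    ∑ u ∈ Finset.Ico τ N, runMax L τ u ω ≤ ∑ u ∈ Finset.Ico σ N, runMax L σ u ω := by
  rcases le_or_gt σ τ with hστ | hτσ
  · calc ∑ u ∈ Finset.Ico τ N, runMax L τ u ω
        ≤ ∑ u ∈ Finset.Ico τ N, runMax L σ u ω :=
          Finset.sum_le_sum fun u hu => runMax_le_runMax_of_passage L hneg hpos
            (Finset.mem_Ico.1 hu).1 (hστ.trans (Finset.mem_Ico.1 hu).1) (Finset.mem_Ico.1 hu).2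
      _ ≤ ∑ u ∈ Finset.Ico σ N, runMax L σ u ω := by
          refine Finset.sum_le_sum_of_subset_of_nonneg (Finset.Ico_subset_Ico hστ le_rfl)
            fun u hu _ => ?_
          obtain ⟨hσu, huN⟩ := Finset.mem_Ico.1 hu
          exact (hpos (hσu.trans_lt huN)).le.trans
            (le_runMax L ω (Finset.mem_Icc.2 ⟨le_rfl, hσu⟩))
  · have hbefore : ∑ u ∈ Finset.Ico τ σ, runMax L τ u ω ≤ 0 :=
      Finset.sum_nonpos fun u hu => runMax_le L (Finset.mem_Ico.1 hu).1 fun v hv =>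
        hneg v ((Finset.mem_Icc.1 hv).2.trans_lt (Finset.mem_Ico.1 hu).2)
    have hafter : ∑ u ∈ Finset.Ico σ N, runMax L τ u ω ≤ ∑ u ∈ Finset.Ico σ N, runMax L σ u ω :=
      Finset.sum_le_sum fun u hu => runMax_le_runMax_of_passage L hneg hpos
        (hτσ.le.trans (Finset.mem_Ico.1 hu).1) (Finset.mem_Ico.1 hu).1 (Finset.mem_Ico.1 hu).2
    rw [← Finset.sum_Ico_consecutive _ hτσ.le hσN]
    linarith

end RunningMax

section UpperPassageTime

variable {Ω : Type*}

noncomputable def upperPassageTime (L : ℕ → Ω → ℝ) (N : ℕ) (ω : Ω) : ℕ :=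
  sInf ({v | v < N ∧ 0 < L v ω} ∪ {N})

variable {L : ℕ → Ω → ℝ} {N : ℕ}

lemma upperPassageTime_mem (ω : Ω) :
    upperPassageTime L N ω ∈ {v | v < N ∧ 0 < L v ω} ∪ {N} :=
  Nat.sInf_mem ⟨N, Or.inr rfl⟩

lemma upperPassageTime_le (ω : Ω) : upperPassageTime L N ω ≤ N :=
  Nat.sInf_le (Or.inr rfl)

lemma nonpos_of_lt_upperPassageTime {ω : Ω} {v : ℕ} (hv : v < upperPassageTime L N ω) :
    L v ω ≤ 0 := by
  by_contra hpos
  exact Nat.notMem_of_lt_sInf hv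
    (Or.inl ⟨hv.trans_le (upperPassageTime_le ω), lt_of_not_ge hpos⟩)

lemma pos_of_upperPassageTime_lt {ω : Ω} (h : upperPassageTime L N ω < N) :
    0 < L (upperPassageTime L N ω) ω := by
  rcases upperPassageTime_mem (L := L) ω with hmem | hmem
  · exact hmem.2
  · exact absurd (Set.mem_singleton_iff.1 hmem) h.ne

lemma upperPassageTime_le_iff {ω : Ω} {t : ℕ} :
    upperPassageTime L N ω ≤ t ↔ N ≤ t ∨ ∃ v < N, v ≤ t ∧ 0 < L v ω := by
  constructor
  · intro h
    rcases upperPassageTime_mem (L := L) ω with hmem | hmem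
    · exact Or.inr ⟨_, hmem.1, h, hmem.2⟩
    · exact Or.inl (Set.mem_singleton_iff.1 hmem ▸ h)
  · rintro (hN | ⟨v, hvN, hvt, hv⟩)
    · exact (upperPassageTime_le ω).trans hN
    · exact (Nat.sInf_le (Or.inl ⟨hvN, hv⟩)).trans hvt

lemma isStoppingTime_upperPassageTime {m0 : MeasurableSpace Ω} {F : Filtration ℕ m0}
    (hL : ∀ t < N, StronglyMeasurable[F t] (L t)) :
    IsStoppingTime F fun ω => (upperPassageTime L N ω : WithTop ℕ) := by
  intro t
  change MeasurableSet[F t] {ω | (upperPassageTime L N ω : WithTop ℕ) ≤ t}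
  have hset : {ω | (upperPassageTime L N ω : WithTop ℕ) ≤ t}
      = {_ω | N ≤ t} ∪ ⋃ v ∈ Finset.range (t + 1), {ω | v < N ∧ 0 < L v ω} := by
    ext ω
    simp [upperPassageTime_le_iff]
  rw [hset]
  refine (MeasurableSet.const _).union (Finset.measurableSet_biUnion _ fun v hv => ?_)
  by_cases hvN : v < N
  · have hvt : v ≤ t := Nat.lt_succ_iff.1 (Finset.mem_range.1 hv)
    simpa [hvN] using
      measurableSet_lt measurable_const ((hL v hvN).measurable.mono (F.mono hvt) le_rfl)
  · simp [hvN]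

end UpperPassageTime

section StoppedValue

variable {Ω : Type*} {m0 : MeasurableSpace Ω} {F : Filtration ℕ m0} {N : ℕ}
  {u : ℕ → Ω → ℝ} {τ : Ω → ℕ}

lemma comp_eq_sum_indicator (hτN : ∀ ω, τ ω ≤ N) :
    (fun ω => u (τ ω) ω) = ∑ n ∈ Finset.Iic N, {ω | τ ω = n}.indicator (u n) := by
  funext ω
  simp [Set.indicator_apply, hτN ω]

lemma stronglyMeasurable_comp_stoppingTime
    (hτ : IsStoppingTime F fun ω => (τ ω : WithTop ℕ)) (hτN : ∀ ω, τ ω ≤ N)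
    (hu : ∀ n ≤ N, StronglyMeasurable[F N] (u n)) :
    StronglyMeasurable[F N] fun ω => u (τ ω) ω := by
  rw [comp_eq_sum_indicator hτN]
  refine Finset.stronglyMeasurable_sum _ fun n hn => ?_
  have hnN := Finset.mem_Iic.1 hn
  exact (hu n hnN).indicator (F.mono hnN _ (by simpa using hτ.measurableSet_eq n))

lemma memLp_comp_stoppingTime {μ : Measure Ω} {p : ENNReal}
    (hτ : IsStoppingTime F fun ω => (τ ω : WithTop ℕ)) (hτN : ∀ ω, τ ω ≤ N)
    (hu : ∀ n ≤ N, MemLp (u n) p μ) :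
    MemLp (fun ω => u (τ ω) ω) p μ := by
  rw [comp_eq_sum_indicator hτN]
  refine memLp_finsetSum' _ fun n hn => ?_
  exact (hu n (Finset.mem_Iic.1 hn)).indicator (F.le n _ (by simpa using hτ.measurableSet_eq n))

lemma isStoppingTime_max_const (hτ : IsStoppingTime F fun ω => (τ ω : WithTop ℕ)) (t : ℕ) :
    IsStoppingTime F fun ω => ((τ ω ⊔ t : ℕ) : WithTop ℕ) := by
  intro i
  convert hτ.max_const t i using 1
  ext ω
  simp

lemma comp_max_eq_piecewise (u : ℕ → Ω → ℝ) (τ : Ω → ℕ) (t : ℕ) :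
    (fun ω => u (τ ω ⊔ t) ω) = {ω | τ ω ≤ t}.indicator (u t)
      + {ω | τ ω ≤ t}ᶜ.indicator fun ω => u (τ ω ⊔ (t + 1)) ω := by
  funext ω
  by_cases h : τ ω ≤ t
  · simp [h]
  · have h' : t < τ ω := lt_of_not_ge h
    simp [h, h'.le, Nat.succ_le_of_lt h']

end StoppedValue

namespace NLExp

variable {Ω : Type*} {m0 : MeasurableSpace Ω} {μ : Measure Ω} {F : Filtration ℕ m0} {N : ℕ}
  (EE : NLExp μ F N)

lemma E_congr {t : ℕ} (ht : t ≤ N) {ξ η : Ω → ℝ}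
    (hξm : StronglyMeasurable[F N] ξ) (hξ : MemLp ξ 2 μ)
    (hηm : StronglyMeasurable[F N] η) (hη : MemLp η 2 μ) (h : ξ =ᵐ[μ] η) :
    EE.E t ξ =ᵐ[μ] EE.E t η :=
  (EE.mono t ht ξ η hξm hξ hηm hη h.le).antisymm (EE.mono t ht η ξ hηm hη hξm hξ h.symm.le)

/-- Translation by `E_t[0]` and the tower property give `E_t[0] = E_t[0] + E_t[0]`. -/
lemma E_zero {t : ℕ} (ht : t ≤ N) : EE.E t 0 =ᵐ[μ] 0 := by
  have h0m : StronglyMeasurable[F N] (0 : Ω → ℝ) := stronglyMeasurable_const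
  have htrans := EE.translation t ht 0 (EE.E t 0) h0m MemLp.zero
    (EE.adapted t ht 0 h0m MemLp.zero) (EE.sqInt t ht 0 h0m MemLp.zero)
  rw [zero_add] at htrans
  filter_upwards [htrans, EE.tower t t le_rfl ht 0 h0m MemLp.zero] with ω h1 h2
  simp only [Pi.add_apply] at h1
  simp only [Pi.zero_apply]
  linarith

lemma E_of_stronglyMeasurable {t : ℕ} (ht : t ≤ N) {ζ : Ω → ℝ}
    (hζm : StronglyMeasurable[F t] ζ) (hζ : MemLp ζ 2 μ) : EE.E t ζ =ᵐ[μ] ζ := by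
  have htrans := EE.translation t ht 0 ζ stronglyMeasurable_const MemLp.zero hζm hζ
  rw [zero_add] at htrans
  filter_upwards [htrans, EE.E_zero ht] with ω h1 h2
  simp only [h1, Pi.add_apply, h2, Pi.zero_apply, zero_add]

lemma E_congr_of_le {s t : ℕ} (hst : s ≤ t) (ht : t ≤ N) {ξ η : Ω → ℝ}
    (hξm : StronglyMeasurable[F N] ξ) (hξ : MemLp ξ 2 μ)
    (hηm : StronglyMeasurable[F N] η) (hη : MemLp η 2 μ) (h : EE.E t ξ =ᵐ[μ] EE.E t η) :
    EE.E s ξ =ᵐ[μ] EE.E s η := by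
  have hEξm := (EE.adapted t ht ξ hξm hξ).mono (F.mono ht)
  have hEηm := (EE.adapted t ht η hηm hη).mono (F.mono ht)
  calc EE.E s ξ =ᵐ[μ] EE.E s (EE.E t ξ) := (EE.tower s t hst ht ξ hξm hξ).symm
    _ =ᵐ[μ] EE.E s (EE.E t η) :=
      EE.E_congr (hst.trans ht) hEξm (EE.sqInt t ht ξ hξm hξ) hEηm (EE.sqInt t ht η hηm hη) h
    _ =ᵐ[μ] EE.E s η := EE.tower s t hst ht η hηm hη

lemma E_piecewise_congr {t : ℕ} (ht : t ≤ N) {A : Set Ω} (hA : MeasurableSet[F t] A)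
    {ξ ξ' η η' : Ω → ℝ}
    (hξm : StronglyMeasurable[F N] ξ) (hξ : MemLp ξ 2 μ)
    (hξ'm : StronglyMeasurable[F N] ξ') (hξ' : MemLp ξ' 2 μ)
    (hηm : StronglyMeasurable[F N] η) (hη : MemLp η 2 μ)
    (hη'm : StronglyMeasurable[F N] η') (hη' : MemLp η' 2 μ)
    (hξξ' : EE.E t ξ =ᵐ[μ] EE.E t ξ') (hηη' : EE.E t η =ᵐ[μ] EE.E t η') :
    EE.E t (A.indicator ξ + Aᶜ.indicator η) =ᵐ[μ] EE.E t (A.indicator ξ' + Aᶜ.indicator η') := by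
  filter_upwards [EE.zeroOne t ht ξ η hξm hξ hηm hη A hA,
    EE.zeroOne t ht ξ' η' hξ'm hξ' hη'm hη' A hA, hξξ', hηη'] with ω h h' e1 e2
  rw [h, h']
  by_cases hω : ω ∈ A <;> simp [hω, e1, e2]

lemma E_comp_stoppingTime_max_congr {X G : ℕ → Ω → ℝ}
    (hXm : ∀ s ≤ N, StronglyMeasurable[F s] (X s)) (hX : ∀ s ≤ N, MemLp (X s) 2 μ)
    (hGm : ∀ s ≤ N, StronglyMeasurable[F N] (G s)) (hG : ∀ s ≤ N, MemLp (G s) 2 μ)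
    (hGN : G N = X N) (hXG : ∀ t < N, X t =ᵐ[μ] EE.E t (G t))
    {τ : Ω → ℕ} (hτ : IsStoppingTime F fun ω => (τ ω : WithTop ℕ)) (hτN : ∀ ω, τ ω ≤ N)
    {t : ℕ} (ht : t ≤ N) :
    EE.E t (fun ω => X (τ ω ⊔ t) ω) =ᵐ[μ] EE.E t (fun ω => G (τ ω ⊔ t) ω) := by
  have hXm' : ∀ s ≤ N, StronglyMeasurable[F N] (X s) := fun s hs => (hXm s hs).mono (F.mono hs)
  induction ht using Nat.decreasingInduction with
  | self =>
    have hmax : ∀ ω, τ ω ⊔ N = N := fun ω => max_eq_right (hτN ω)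
    simp only [hmax, hGN]
    rfl
  | of_succ t htN ih =>
    have hσ := isStoppingTime_max_const hτ (t + 1)
    have hσN : ∀ ω, τ ω ⊔ (t + 1) ≤ N := fun ω => max_le (hτN ω) htN
    have hA : MeasurableSet[F t] {ω | τ ω ≤ t} := by simpa using hτ.measurableSet_le t
    rw [comp_max_eq_piecewise X, comp_max_eq_piecewise G]
    refine EE.E_piecewise_congr htN.le hA (hXm' t htN.le) (hX t htN.le)
      (hGm t htN.le) (hG t htN.le)
      (stronglyMeasurable_comp_stoppingTime hσ hσN hXm') (memLp_comp_stoppingTime hσ hσN hX)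
      (stronglyMeasurable_comp_stoppingTime hσ hσN hGm) (memLp_comp_stoppingTime hσ hσN hG)
      ?_ ?_
    · exact (EE.E_of_stronglyMeasurable htN.le (hXm t htN.le) (hX t htN.le)).trans (hXG t htN)
    · exact EE.E_congr_of_le t.le_succ htN
        (stronglyMeasurable_comp_stoppingTime hσ hσN hXm') (memLp_comp_stoppingTime hσ hσN hX)
        (stronglyMeasurable_comp_stoppingTime hσ hσN hGm) (memLp_comp_stoppingTime hσ hσN hG) ih

end NLExp

theorem level_crossing_upper_passage_time_optimal_general
{Ω : Type*}
    [m0 : MeasurableSpace Ω]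
    (μ : Measure Ω)
    (F : Filtration ℕ m0) (N : ℕ)
    (EE : NLExp μ F N)
(X : ℕ → Ω → ℝ)
    (hX_adapted : ∀ t, t ≤ N → StronglyMeasurable[F t] (X t))
    (hX_sqInt : ∀ t, t ≤ N → MemLp (X t) 2 μ)
(L : ℕ → Ω → ℝ)
    (hL_adapted : ∀ t, t < N → StronglyMeasurable[F t] (L t))
    (hL_sqInt : ∀ t, t < N →
      MemLp (fun ω => ∑ u ∈ Finset.Ico t N, runMax L t u ω) 2 μ)
    (hL_rep : ∀ t, t < N →
      X t =ᵐ[μ] EE.E t fun ω => (∑ u ∈ Finset.Ico t N, runMax L t u ω) + X N ω)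
    (τbar : Ω → ℕ)
    (hτbar_def : ∀ ω, τbar ω = sInf ({v | v < N ∧ 0 < L v ω} ∪ {N})) :
    IsStoppingTime F (fun ω => (τbar ω : WithTop ℕ)) ∧ (∀ ω, τbar ω ≤ N) ∧
    ∀ τ : Ω → ℕ, IsStoppingTime F (fun ω => (τ ω : WithTop ℕ)) → (∀ ω, τ ω ≤ N) →
      EE.E 0 (fun ω => X (τ ω) ω) ≤ᵐ[μ] EE.E 0 fun ω => X (τbar ω) ω := by
  obtain rfl : τbar = upperPassageTime L N := funext hτbar_def
  have hτbar := isStoppingTime_upperPassageTime hL_adapted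
  refine ⟨hτbar, upperPassageTime_le, fun τ hτ hτN => ?_⟩
  set G : ℕ → Ω → ℝ := fun s ω => (∑ u ∈ Finset.Ico s N, runMax L s u ω) + X N ω
  have hGm : ∀ s ≤ N, StronglyMeasurable[F N] (G s) := fun s _ =>
    (stronglyMeasurable_sum_runMax hL_adapted s).add (hX_adapted N le_rfl)
  have hG : ∀ s ≤ N, MemLp (G s) 2 μ := by
    intro s hs
    rcases hs.lt_or_eq with hsN | rfl
    · exact (hL_sqInt s hsN).add (hX_sqInt N le_rfl)
    · simpa [G] using hX_sqInt s le_rfl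
  have hGN : G N = X N := funext fun ω => by simp [G]
  have hsample : ∀ σ : Ω → ℕ, IsStoppingTime F (fun ω => (σ ω : WithTop ℕ)) →
      (∀ ω, σ ω ≤ N) → EE.E 0 (fun ω => X (σ ω) ω) =ᵐ[μ] EE.E 0 fun ω => G (σ ω) ω :=
    fun σ hσ hσN => by
      simpa only [Nat.max_zero] using EE.E_comp_stoppingTime_max_congr hX_adapted hX_sqInt
        hGm hG hGN hL_rep hσ hσN N.zero_le
  have hpath : (fun ω => G (τ ω) ω) ≤ fun ω => G (upperPassageTime L N ω) ω := fun ω =>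
    add_le_add_left (sum_runMax_le_of_passage L (fun _ => nonpos_of_lt_upperPassageTime)
      pos_of_upperPassageTime_lt (upperPassageTime_le ω)) _
  have hmono := EE.mono 0 N.zero_le _ _
    (stronglyMeasurable_comp_stoppingTime hτ hτN hGm) (memLp_comp_stoppingTime hτ hτN hG)
    (stronglyMeasurable_comp_stoppingTime hτbar upperPassageTime_le hGm)
    (memLp_comp_stoppingTime hτbar upperPassageTime_le hG) (ae_of_all μ hpath)
  filter_upwards [hsample τ hτ hτN, hmono, hsample _ hτbar upperPassageTime_le]
    with ω hτω hle hτbarω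
  rw [hτω, hτbarω]
  exact hle

/-- **Level-crossing principle, upper level-passage time.** The stopping time
`τ̄ := min{ v ∈ {0,...,N-1} : L_v > 0 } ∧ N` is optimal for the optimal stopping
problem under the nonlinear expectation: `E 0 [X_τ] ≤ E 0 [X_τ̄]` a.s. for every
stopping time `τ ∈ T_{0,N}`. -/
theorem level_crossing_upper_passage_time_optimal
{Ω : Type*} [TopologicalSpace Ω] [PolishSpace Ω]
    [m0 : MeasurableSpace Ω] [BorelSpace Ω]
    (μ : Measure Ω) [IsProbabilityMeasure μ]
    (F : Filtration ℕ m0) (N : ℕ) (hN : 1 ≤ N)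
    (EE : NLExp μ F N)
(X : ℕ → Ω → ℝ)
    (hX_adapted : ∀ t, t ≤ N → StronglyMeasurable[F t] (X t))
    (hX_sqInt : ∀ t, t ≤ N → MemLp (X t) 2 μ)
(L : ℕ → Ω → ℝ)
    (hL_adapted : ∀ t, t < N → StronglyMeasurable[F t] (L t))
    (hL_sqInt : ∀ t, t < N →
      MemLp (fun ω => ∑ u ∈ Finset.Ico t N, runMax L t u ω) 2 μ)
    (hL_rep : ∀ t, t < N →
      X t =ᵐ[μ] EE.E t fun ω => (∑ u ∈ Finset.Ico t N, runMax L t u ω) + X N ω)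
    (τbar : Ω → ℕ)
    (hτbar_def : ∀ ω, τbar ω = sInf ({v | v < N ∧ 0 < L v ω} ∪ {N})) :
    IsStoppingTime F (fun ω => (τbar ω : WithTop ℕ)) ∧ (∀ ω, τbar ω ≤ N) ∧
    ∀ τ : Ω → ℕ, IsStoppingTime F (fun ω => (τ ω : WithTop ℕ)) → (∀ ω, τ ω ≤ N) →
      EE.E 0 (fun ω => X (τ ω) ω) ≤ᵐ[μ] EE.E 0 fun ω => X (τbar ω) ω :=
  level_crossing_upper_passage_time_optimal_general (m0 := m0) μ F N EE X hX_adapted hX_sqInt L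
    hL_adapted hL_sqInt hL_rep τbar hτbar_def
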